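/- arXiv:1310.6847 — 2 statements merged into one kernel-verified Lean document; each statement's English description precedes it below -/
import Mathlib

section
/- Soundness of implicit abstraction for safety: if every state reachable in the abstracted system (I, AbsT_P) satisfies the property P_good, then every state reachable in the concrete system (I, T) satisfies P_good. -/
def EQP {S : Type*} (P : Set (S → Prop)) (s t : S) : Prop := ∀ p ∈ P, (p s ↔ p t)

def AbsT {S : Type*} (P : Set (S → Prop)) (T : S → S → Prop) (x x' : S) : Prop :=
  ∃ xb xb', EQP P x xb ∧ T xb xb' ∧ EQP P xb' x'

/-- `s` is reachable in the system `(Init, R)`. -/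
def Reachable {S : Type*} (Init : S → Prop) (R : S → S → Prop) (s : S) : Prop :=
  ∃ (k : ℕ) (f : ℕ → S), Init (f 0) ∧ (∀ i < k, R (f i) (f (i+1))) ∧ f k = s

theorem EQP.refl {S : Type*} (P : Set (S → Prop)) (s : S) : EQP P s s :=
  fun _ _ => Iff.rfl

theorem AbsT.of_rel {S : Type*} (P : Set (S → Prop)) {T : S → S → Prop} {x x' : S}
    (h : T x x') : AbsT P T x x' :=
  ⟨x, x', EQP.refl P x, h, EQP.refl P x'⟩

theorem Reachable.mono {S : Type*} {Init : S → Prop} {R R' : S → S → Prop}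
    (hR : ∀ x y, R x y → R' x y) {s : S} (hs : Reachable Init R s) : Reachable Init R' s := by
  obtain ⟨k, f, h0, hstep, hk⟩ := hs
  exact ⟨k, f, h0, fun i hi => hR _ _ (hstep i hi), hk⟩

theorem abs_safety_sound {S : Type*} (P : Set (S → Prop)) (I Pgood : S → Prop)
    (T : S → S → Prop)
    (habs : ∀ s, Reachable I (AbsT P T) s → Pgood s) :
    ∀ s, Reachable I T s → Pgood s :=
  fun s hs => habs s (hs.mono fun _ _ => AbsT.of_rel P)
end

section
/- Fixpoint termination condition of IC3: suppose F_0, ..., F_k is a sequence of state predicates with F_0 = I, F_i ⊨ F_{i+1} for all i < k, F_i(x) ∧ T(x, x') ⊨ F_{i+1}(x') for all i < k, and F_i ⊨ P_good for all i < k. If F_j = F_{j+1} for some j < k (extensionally equal), then F_j is an inductive invariant of (I, T), and hence every reachable state of (I, T) satisfies P_good. -/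
/-!
Because consecutive frames are ordered, `I = F 0 ⊆ F j`; because each frame is mapped by `T`
into the next one, `T (F j) ⊆ F (j+1) = F j`. So `F j` is an inductive invariant, it contains
every reachable state, and `F j ⊆ P_good` since `j < k`.
-/

def IsInductiveInvariant {S : Type*} (Init : S → Prop) (R : S → S → Prop) (Inv : S → Prop) :
    Prop :=
  (∀ s, Init s → Inv s) ∧ ∀ s s', Inv s → R s s' → Inv s'

theorem IsInductiveInvariant.of_reachable {S : Type*} {Init Inv : S → Prop} {R : S → S → Prop}
    (hinv : IsInductiveInvariant Init R Inv) {s : S} (hs : Reachable Init R s) : Inv s := by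
  obtain ⟨n, f, hf0, hstep, rfl⟩ := hs
  suffices ∀ m ≤ n, Inv (f m) from this n le_rfl
  intro m
  induction m with
  | zero => exact fun _ => hinv.1 _ hf0
  | succ m ih => exact fun hm => hinv.2 _ _ (ih (m.le_succ.trans hm)) (hstep m hm)

theorem isInductiveInvariant_of_frame_eq_succ {S : Type*} {T : S → S → Prop} {k : ℕ}
    {F : Fin (k+1) → S → Prop}
    (hmono : ∀ i : Fin k, F i.castSucc ≤ F i.succ)
    (hstep : ∀ i : Fin k, ∀ s s', F i.castSucc s → T s s' → F i.succ s')
    {j : Fin k} (hfix : F j.castSucc = F j.succ) :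
    IsInductiveInvariant (F 0) T (F j.castSucc) := by
  refine ⟨Fin.monotone_iff_le_succ.2 hmono (Fin.zero_le _), fun s s' hs hT => ?_⟩
  rw [hfix]
  exact hstep j s s' hs hT

theorem ic3_fixpoint {S : Type*} (I Pgood : S → Prop) (T : S → S → Prop)
    {k : ℕ} (F : Fin (k+1) → S → Prop)
    (h0 : F 0 = I)
    (h1 : ∀ i : Fin k, ∀ s, F i.castSucc s → F i.succ s)
    (h2 : ∀ i : Fin k, ∀ s s', F i.castSucc s → T s s' → F i.succ s')
    (h3 : ∀ i : Fin k, ∀ s, F i.castSucc s → Pgood s)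
    (j : Fin k) (hfix : F j.castSucc = F j.succ) :
    ((∀ s, I s → F j.castSucc s) ∧
     (∀ s s', F j.castSucc s → T s s' → F j.castSucc s')) ∧
    (∀ s, Reachable I T s → Pgood s) := by
  have hinv : IsInductiveInvariant I T (F j.castSucc) :=
    h0 ▸ isInductiveInvariant_of_frame_eq_succ h1 h2 hfix
  exact ⟨hinv, fun s hs => h3 j s (hinv.of_reachable hs)⟩
end
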